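/- arXiv:2406.15600 — 5 statements merged into one kernel-verified Lean document; each statement's English description precedes it below -/
import Mathlib

section
/- Let m ≥ 0 be an integer. Define β(a,i) for integers a ≥ 1 and 1 ≤ i ≤ m+1 recursively by β(1,i) = C(m+1, i), and for a ≥ 2, β(a,i) = Σ_{l=1}^{a-1} (-1)^{l+1} C(m+1, l) β(a-l, i) + (-1)^{a-1} C(m+1, i+a-1). Then β(a,i) = C(i+a-2, a-1) · C(m+a, i+a-1) for all a ≥ 1 and 1 ≤ i ≤ m+1. -/
/-!
As a function of `a`, the closed form `C(a+i-2, i-1) * C(a+m, m+1-i)` is a polynomial of degree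
`m`, so its `(m+1)`-st forward difference vanishes:
`∑_{l=0}^{m+1} (-1)^l C(m+1, l) P(a-l) = 0`. The terms with `l < a` are the recursion. At the
points `a - l = -s` with `0 ≤ s ≤ m` the polynomial vanishes except at `s = i-1`, where it equals
`(-1)^(i-1)`; this single term is the inhomogeneous term `(-1)^(a-1) C(m+1, i+a-1)`. Induction on
`a` finishes the proof.
-/

open Finset fwdDiff

section LeibnizRule

variable {M R : Type*} [AddCommMonoid M] [Ring R]

theorem fwdDiff_mul (h : M) (u v : M → R) :
    Δ_[h] (u * v) = Δ_[h] u * (fun x => v (x + h)) + u * Δ_[h] v := by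
  funext x
  simp only [fwdDiff, Pi.add_apply, Pi.mul_apply, sub_mul, mul_sub]
  abel

theorem fwdDiff_iter_zero (h : M) (n : ℕ) : Δ_[h] ^[n] (0 : M → R) = 0 :=
  Function.iterate_fixed (funext fun _ => sub_self 0) n

theorem fwdDiff_iter_mul_eq_zero (h : M) {p q : ℕ} {u v : M → R}
    (hu : Δ_[h] ^[p + 1] u = 0) (hv : Δ_[h] ^[q + 1] v = 0) :
    Δ_[h] ^[p + q + 1] (u * v) = 0 := by
  induction hn : p + q generalizing p q u v with
  | zero =>
    obtain ⟨rfl, rfl⟩ : p = 0 ∧ q = 0 := by omega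
    simp_all [fwdDiff_mul]
  | succ n ih =>
    have h_left : Δ_[h] ^[n + 1] (Δ_[h] u * fun x => v (x + h)) = 0 := by
      rcases p with _ | p
      · simp_all [fwdDiff_iter_zero]
      · refine ih (p := p) (q := q) hu ?_ (by omega)
        funext x
        simpa [fwdDiff_iter_comp_add] using congr_fun hv (x + h)
    have h_right : Δ_[h] ^[n + 1] (u * Δ_[h] v) = 0 := by
      rcases q with _ | q
      · simp_all [fwdDiff_iter_zero]
      · exact ih (p := p) (q := q) hu hv (by omega)
    rw [Function.iterate_succ_apply, fwdDiff_mul, fwdDiff_iter_add, h_left, h_right, add_zero]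

end LeibnizRule

theorem fwdDiff_choose_add {R : Type*} [Ring R] [BinomialRing R] (c : R) (k : ℕ) :
    Δ_[1] (fun x => Ring.choose (x + c) (k + 1)) = fun x => Ring.choose (x + c) k := by
  funext x
  rw [fwdDiff, add_right_comm, Ring.choose_succ_succ, add_sub_cancel_right]

theorem fwdDiff_iter_choose_add_eq_zero {R : Type*} [Ring R] [BinomialRing R] (c : R) (k : ℕ) :
    Δ_[1] ^[k + 1] (fun x => Ring.choose (x + c) k) = 0 := by
  induction k with
  | zero => funext x; simp [fwdDiff]
  | succ k ih => rwa [Function.iterate_succ_apply, fwdDiff_choose_add]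

theorem fwdDiff_iter_eq_sum_sub {G : Type*} [AddCommGroup G] (f : ℤ → G) (n : ℕ) (x : ℤ) :
    Δ_[1] ^[n] f (x - n) = ∑ l ∈ range (n + 1), ((-1 : ℤ) ^ l * n.choose l) • f (x - l) := by
  rw [fwdDiff_iter_eq_sum_shift, ← sum_range_reflect]
  refine sum_congr rfl fun l hl => ?_
  have hl : l ≤ n := by rw [mem_range] at hl; omega
  rw [Nat.add_sub_cancel, Nat.sub_sub_self hl, Nat.choose_symm hl]
  congr 2
  rw [nsmul_one, Nat.cast_sub hl]
  ring

theorem Ring.choose_neg_one {R : Type*} [Ring R] [BinomialRing R] (n : ℕ) :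
    Ring.choose (-1 : R) n = (-1) ^ n := by
  rw [Ring.choose_neg, add_sub_cancel_left, Ring.choose_natCast, Nat.choose_self, Nat.cast_one,
    Units.smul_def, zsmul_one, Int.cast_negOnePow_natCast]

/-- `β(a, i)` as a polynomial function of `a` of degree `m`, extended to all of `ℤ`. -/
def betaPoly (m i : ℕ) : ℤ → ℤ :=
  (fun x => Ring.choose (x + ((i : ℤ) - 2)) (i - 1)) *
    fun x => Ring.choose (x + (m : ℤ)) (m + 1 - i)

section betaPoly

variable {m i : ℕ}

theorem fwdDiff_iter_betaPoly (hi₁ : 1 ≤ i) (hi₂ : i ≤ m + 1) :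
    Δ_[1] ^[m + 1] (betaPoly m i) = 0 := by
  have := fwdDiff_iter_mul_eq_zero 1 (fwdDiff_iter_choose_add_eq_zero ((i : ℤ) - 2) (i - 1))
    (fwdDiff_iter_choose_add_eq_zero (m : ℤ) (m + 1 - i))
  rwa [show i - 1 + (m + 1 - i) = m by omega] at this

theorem betaPoly_natCast (hi₁ : 1 ≤ i) (hi₂ : i ≤ m + 1) {b : ℕ} (hb : 1 ≤ b) :
    betaPoly m i b = ((i + b - 2).choose (b - 1) : ℤ) * ((m + b).choose (i + b - 1) : ℤ) := by
  have e₁ : (b : ℤ) + ((i : ℤ) - 2) = ((i + b - 2 : ℕ) : ℤ) := by omega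
  have e₂ : (b : ℤ) + m = ((m + b : ℕ) : ℤ) := by omega
  rw [betaPoly, Pi.mul_apply, e₁, e₂, Ring.choose_natCast, Ring.choose_natCast,
    ← Nat.choose_symm_of_eq_add (show i + b - 2 = (i - 1) + (b - 1) by omega),
    Nat.choose_symm_of_eq_add (show m + b = (m + 1 - i) + (i + b - 1) by omega)]

theorem betaPoly_neg (hi₁ : 1 ≤ i) (hi₂ : i ≤ m + 1) {s : ℕ} (hs : s ≤ m) :
    betaPoly m i (-s) = if s = i - 1 then (-1) ^ (i - 1) else 0 := by
  have e : -(s : ℤ) + m = ((m - s : ℕ) : ℤ) := by omega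
  rw [betaPoly, Pi.mul_apply, e, Ring.choose_natCast]
  split_ifs with hsi
  · subst hsi
    rw [show -((i - 1 : ℕ) : ℤ) + ((i : ℤ) - 2) = -1 by omega, Ring.choose_neg_one,
      show m - (i - 1) = m + 1 - i by omega, Nat.choose_self, Nat.cast_one, mul_one]
  rcases lt_or_gt_of_ne hsi with hlt | hgt
  · rw [show -(s : ℤ) + ((i : ℤ) - 2) = ((i - 2 - s : ℕ) : ℤ) by omega, Ring.choose_natCast,
      Nat.choose_eq_zero_of_lt (by omega), Nat.cast_zero, zero_mul]
  · rw [Nat.choose_eq_zero_of_lt (by omega), Nat.cast_zero, mul_zero]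

theorem sum_range_betaPoly_sub_eq_zero (hi₁ : 1 ≤ i) (hi₂ : i ≤ m + 1) (x : ℤ) :
    ∑ l ∈ range (m + 2), (-1 : ℤ) ^ l * (m + 1).choose l * betaPoly m i (x - l) = 0 := by
  simp only [← smul_eq_mul (a := _ * _), ← fwdDiff_iter_eq_sum_sub,
    fwdDiff_iter_betaPoly hi₁ hi₂, Pi.zero_apply]

theorem sum_range_betaPoly_neg (hi₁ : 1 ≤ i) (hi₂ : i ≤ m + 1) (a : ℕ) :
    ∑ s ∈ range (m + 1), (-1 : ℤ) ^ (a + s) * (m + 1).choose (a + s) * betaPoly m i (-s) =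
      (-1) ^ a * (m + 1).choose (i + a - 1) := by
  have h_term : ∀ s ∈ range (m + 1),
      (-1 : ℤ) ^ (a + s) * (m + 1).choose (a + s) * betaPoly m i (-s) =
        if s = i - 1 then (-1) ^ a * ((m + 1).choose (i + a - 1) : ℤ) else 0 := by
    intro s hs
    rw [betaPoly_neg hi₁ hi₂ (by rw [mem_range] at hs; omega)]
    split_ifs with hsi
    · subst hsi
      have h_sq : ((-1 : ℤ) ^ (i - 1)) * (-1) ^ (i - 1) = 1 := by
        rw [← pow_add, ← two_mul, pow_mul]; norm_num
      rw [pow_add, show a + (i - 1) = i + a - 1 by omega]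
      linear_combination (-1 : ℤ) ^ a * ((m + 1).choose (i + a - 1) : ℤ) * h_sq
    · exact mul_zero _
  rw [sum_congr rfl h_term, sum_ite_eq', if_pos (mem_range.2 (by omega))]

theorem betaPoly_rec (hi₁ : 1 ≤ i) (hi₂ : i ≤ m + 1) {a : ℕ} (ha : 1 ≤ a) :
    betaPoly m i a = ∑ l ∈ Icc 1 (a - 1),
        (-1 : ℤ) ^ (l + 1) * ((m + 1).choose l : ℤ) * betaPoly m i ↑(a - l)
      + (-1 : ℤ) ^ (a - 1) * ((m + 1).choose (i + a - 1) : ℤ) := by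
  obtain ⟨a, rfl⟩ : ∃ a', a = a' + 1 := ⟨a - 1, by omega⟩
  have h_sum := sum_range_betaPoly_sub_eq_zero hi₁ hi₂ (a + 1 : ℕ)
  -- the terms with `l > m + 1` vanish, so the sum may run up to `a + m + 1`
  rw [sum_subset (range_subset_range.2 (by omega : m + 2 ≤ a + 1 + (m + 1))) fun l _ hl => by
      rw [Nat.choose_eq_zero_of_lt (by rw [mem_range] at hl; omega)]; ring,
    sum_range_add, sum_range_succ'] at h_sum
  simp only [Nat.cast_add, sub_add_cancel_left] at h_sum
  rw [sum_range_betaPoly_neg hi₁ hi₂, ← Nat.cast_add, show i + (a + 1) - 1 = i + a by omega]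
    at h_sum
  rw [show i + (a + 1) - 1 = i + a by omega]
  have h_head : ∀ l ∈ range a, (-1 : ℤ) ^ (1 + l + 1) * ((m + 1).choose (1 + l) : ℤ) *
      betaPoly m i ↑(a + 1 - (1 + l)) =
        -((-1) ^ (l + 1) * (m + 1).choose (l + 1) * betaPoly m i (↑(a + 1) - (↑l + ↑1))) := by
    intro l hl
    push_cast [Nat.cast_sub (show 1 + l ≤ a + 1 by rw [mem_range] at hl; omega)]
    ring_nf
  rw [← Ico_add_one_right_eq_Icc, sum_Ico_eq_sum_range, Nat.add_sub_cancel, Nat.add_sub_cancel,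
    sum_congr rfl h_head, sum_neg_distrib]
  simp only [pow_zero, Nat.choose_zero_right, Nat.cast_zero, sub_zero] at h_sum
  linear_combination h_sum

end betaPoly

/-- If β satisfies the given recursion, then
    β(a,i) = C(i+a-2, a-1) · C(m+a, i+a-1). -/
theorem stmt_0 (m : ℕ) (β : ℕ → ℕ → ℤ)
    (h1 : ∀ i, 1 ≤ i → i ≤ m + 1 → β 1 i = ((m + 1).choose i : ℤ))
    (h2 : ∀ a i, 2 ≤ a → 1 ≤ i → i ≤ m + 1 →
      β a i = (∑ l ∈ Finset.Icc 1 (a - 1),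
          (-1 : ℤ) ^ (l + 1) * ((m + 1).choose l : ℤ) * β (a - l) i)
        + (-1 : ℤ) ^ (a - 1) * ((m + 1).choose (i + a - 1) : ℤ)) :
    ∀ a i, 1 ≤ a → 1 ≤ i → i ≤ m + 1 →
      β a i = ((i + a - 2).choose (a - 1) : ℤ) * ((m + a).choose (i + a - 1) : ℤ) := by
  intro a i ha hi₁ hi₂
  rw [← betaPoly_natCast hi₁ hi₂ ha]
  induction a using Nat.strong_induction_on with
  | _ a ih =>
    obtain rfl | ha₂ := ha.eq_or_lt
    · rw [h1 i hi₁ hi₂, betaPoly_natCast hi₁ hi₂ le_rfl]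
      simp
    · rw [h2 a i ha₂ hi₁ hi₂, betaPoly_rec hi₁ hi₂ ha]
      congr 1
      refine Finset.sum_congr rfl fun l hl => ?_
      rw [Finset.mem_Icc] at hl
      rw [ih (a - l) (by omega) (by omega)]
end

section
/- Let p be a prime, t ≥ 1 an integer, and r, s, j nonnegative integers with p^t dividing r − s and t ≥ ν_p(j!), where ν_p denotes the p-adic valuation. Then C(r, j) ≡ C(s, j) (mod p^{t − ν_p(j!)}). -/
/-- C(r,j) ≡ C(s,j) mod p^{t - ν_p(j!)} whenever p^t ∣ r − s. -/
theorem stmt_5 (p t r s j : ℕ) (hp : p.Prime) (ht : 1 ≤ t)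
    (hdvd : ((p : ℤ)) ^ t ∣ (r : ℤ) - (s : ℤ))
    (hval : (j.factorial).factorization p ≤ t) :
    (r.choose j : ℤ) ≡ (s.choose j : ℤ)
      [ZMOD ((p : ℤ)) ^ (t - (j.factorial).factorization p)] := by
  set m := (j.factorial).factorization p with hm
  -- key divisibility: p^t ∣ j! * (C(r,j) - C(s,j))
  have key : (p : ℤ) ^ t ∣ (j.factorial : ℤ) * ((r.choose j : ℤ) - (s.choose j : ℤ)) := by
    have h1 : (j.factorial : ℤ) * ((r.choose j : ℤ) - (s.choose j : ℤ))
        = (descPochhammer ℤ j).eval (r : ℤ) - (descPochhammer ℤ j).eval (s : ℤ) := by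
      rw [descPochhammer_eval_eq_descFactorial, descPochhammer_eval_eq_descFactorial]
      push_cast [Nat.descFactorial_eq_factorial_mul_choose]
      ring
    rw [h1]
    exact hdvd.trans (Polynomial.sub_dvd_eval_sub _ _ _)
  -- write j! = p^m * u with p ∤ u
  obtain ⟨u, hu⟩ := Nat.ordProj_dvd j.factorial p
  have hpu : ¬ p ∣ u := by
    intro hdvdu
    have : p ^ (m + 1) ∣ j.factorial := by
      rw [hu, pow_succ]
      exact mul_dvd_mul_left _ hdvdu
    have := (Nat.Prime.pow_dvd_iff_le_factorization hp j.factorial_ne_zero).mp this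
    omega
  have hu' : (j.factorial : ℤ) = (p : ℤ) ^ m * (u : ℤ) := by exact_mod_cast hu
  have hcop : IsCoprime ((p : ℤ) ^ (t - m)) (u : ℤ) := by
    apply IsCoprime.pow_left
    rw [Nat.isCoprime_iff_coprime]
    exact (Nat.Prime.coprime_iff_not_dvd hp).mpr hpu
  have hdvd2 : (p : ℤ) ^ (t - m) ∣ ((r.choose j : ℤ) - (s.choose j : ℤ)) := by
    have h2 : (p : ℤ) ^ m * ((p : ℤ) ^ (t - m)) = (p : ℤ) ^ t := by
      rw [← pow_add]; congr 1; omega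
    rw [hu', mul_assoc] at key
    have h3 : (p : ℤ) ^ (t - m) ∣ (u : ℤ) * ((r.choose j : ℤ) - (s.choose j : ℤ)) := by
      rcases key with ⟨c, hc⟩
      refine ⟨c, ?_⟩
      have hpne : ((p : ℤ) ^ m) ≠ 0 := pow_ne_zero _ (by exact_mod_cast hp.ne_zero)
      apply mul_left_cancel₀ hpne
      rw [hc, ← h2]; ring
    exact hcop.dvd_of_dvd_mul_left h3
  exact (Int.ModEq.symm (Int.modEq_iff_dvd.mpr hdvd2))
end

section
/- Let n, c, i, l, m be integers with 1 ≤ m ≤ c−1, n + c − m − 1 ≥ 0, max(0, n) ≤ l, max(1, n+1) ≤ i, and suppose additionally that l ≤ min(m, n + c − m − 2) and n + c ≥ 2m + 2 (so that both correction terms C₁ and C₂ vanish). Then Σ_{k=0}^{c-m-1} (-1)^k (c−k) C(c−m−1+i, k) C(c−m−2+i−k, i−(n+1)) C(l+c−m−1−k, l) equals 0 when i ≤ l, and equals (-1)^{n+c−m−1+l} (m+1−i) C(i−1, l) when l ≤ i − 1. -/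
/-!
With `K = c - m - 1`, `d = i - n - 1` and `M = K + i`, the summand is `(-1)^k C(M, k) f(k)` with
`f(k) = (c - k) C(M - 1 - k, d) C(l + K - k, l)`. Read with generalized binomial coefficients,
`f` is a polynomial of degree `d + l + 1`, and `l ≤ n + c - m - 2` is exactly `d + l + 1 < M`; so
the `M`-th finite difference `∑_{k=0}^{M} (-1)^k C(M, k) f(k)` vanishes. The given sum stops at
`k = K`, and for `K < k < M` one binomial of `f(k)` has upper index in `[0, lower index)`: the
second one if `k ≤ K + l`, the first one otherwise, as `n ≤ l` gives `M - 1 - k < d`. So only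
`k = M` survives, where upper negation gives `C(-1, d) C(l - i, l) = (-1)^(d + l) C(i - 1, l)`,
which is `0` when `1 ≤ i ≤ l`.
-/

/-- Integer binomial coefficient with the convention C(a,b) = 0 if b < 0 or b > a. -/
def izC (a b : ℤ) : ℤ := if 0 ≤ b ∧ b ≤ a then (a.toNat).choose b.toNat else 0

open Finset Polynomial

theorem Polynomial.sum_range_neg_one_pow_mul_choose_mul_eval_eq_zero {R : Type*} [CommRing R]
    (P : R[X]) {M : ℕ} (hP : P.natDegree < M) :
    ∑ k ∈ range (M + 1), (-1 : R) ^ k * M.choose k * P.eval (k : R) = 0 := by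
  have h := congr_fun (P.fwdDiff_iter_eq_zero_of_degree_lt hP) 0
  rw [fwdDiff_iter_eq_sum_shift, Pi.zero_apply] at h
  rw [← mul_zero ((-1 : R) ^ M), ← h, mul_sum]
  refine sum_congr rfl fun k hk ↦ ?_
  have hkM : k ≤ M := Nat.lt_succ_iff.mp (mem_range.mp hk)
  rw [zsmul_eq_mul, zero_add, nsmul_one]
  push_cast
  rw [← mul_assoc, ← mul_assoc, ← pow_add, show M + (M - k) = 2 * (M - k) + k by omega, pow_add,
    pow_mul, neg_one_sq, one_pow, one_mul]

theorem Int.cast_ringChoose_eq_descPochhammer_eval_div (y : ℤ) (d : ℕ) :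
    ((Ring.choose y d : ℤ) : ℚ) = (descPochhammer ℚ d).eval (y : ℚ) / d.factorial := by
  rw [eq_div_iff (by positivity), ← descPochhammer_eval_cast, eval_eq_smeval,
    Ring.descPochhammer_eq_factorial_smul_choose]
  push_cast [nsmul_eq_mul]
  ring

theorem Int.ringChoose_neg (r : ℤ) (n : ℕ) :
    Ring.choose (-r) n = (-1) ^ n * Ring.choose (r + n - 1) n := by
  rw [Ring.choose_neg, Units.smul_def, Int.coe_negOnePow_natCast, smul_eq_mul]

theorem Int.ringChoose_eq_zero_of_lt {y : ℤ} {n : ℕ} (hy : 0 ≤ y) (h : y < n) :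
    Ring.choose y n = 0 := by
  lift y to ℕ using hy
  rw [Ring.choose_natCast, Nat.choose_eq_zero_of_lt (by omega), Nat.cast_zero]

theorem natDegree_descPochhammer_comp_C_sub_X_le {R : Type*} [CommRing R] [IsDomain R] (a : R)
    (d : ℕ) : ((descPochhammer R d).comp (C a - X)).natDegree ≤ d := by
  refine natDegree_comp_le.trans ?_
  rw [descPochhammer_natDegree]
  nlinarith [show (C a - X).natDegree ≤ 1 by compute_degree]

theorem sum_range_neg_one_pow_mul_choose_mul_ringChoose_eq_zero (c a b : ℤ) {M d l : ℕ}
    (h : d + l + 1 < M) :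
    ∑ k ∈ range (M + 1), (-1 : ℤ) ^ k * M.choose k *
      ((c - k) * Ring.choose (a - k) d * Ring.choose (b - k) l) = 0 := by
  set P : ℚ[X] := (C (c : ℚ) - X) * (descPochhammer ℚ d).comp (C (a : ℚ) - X) *
    (descPochhammer ℚ l).comp (C (b : ℚ) - X)
  have hP : P.natDegree < M := by
    refine lt_of_le_of_lt ?_ (show 1 + d + l < M by omega)
    exact natDegree_mul_le.trans (add_le_add (natDegree_mul_le.trans (add_le_add
      (by compute_degree) (natDegree_descPochhammer_comp_C_sub_X_le _ _)))
      (natDegree_descPochhammer_comp_C_sub_X_le _ _))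
  apply Int.cast_injective (α := ℚ)
  rw [Int.cast_zero, ← mul_right_inj' (by positivity : ((d.factorial * l.factorial : ℕ) : ℚ) ≠ 0),
    mul_zero, ← P.sum_range_neg_one_pow_mul_choose_mul_eval_eq_zero hP, Int.cast_sum, mul_sum]
  refine sum_congr rfl fun k _ ↦ ?_
  simp only [P, eval_mul, eval_comp, eval_sub, eval_C, eval_X, Int.cast_mul, Int.cast_sub,
    Int.cast_natCast, Int.cast_ringChoose_eq_descPochhammer_eval_div, Int.cast_pow, Int.cast_neg,
    Int.cast_one]
  field_simp
  push_cast
  ring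

theorem sum_range_neg_one_pow_mul_choose_mul_ringChoose_truncated (c : ℤ) {K i l d : ℕ}
    (hi : 1 ≤ i) (hdeg : d + l + 1 < K + i) (hd : i ≤ d + l + 1) :
    ∑ k ∈ range (K + 1), (-1 : ℤ) ^ k * (K + i).choose k *
      ((c - k) * Ring.choose ((K + i - 1 : ℤ) - k) d * Ring.choose ((l + K : ℤ) - k) l) =
    (-1) ^ (K + i + d + l + 1) * (c - (K + i)) * Ring.choose ((i : ℤ) - 1) l := by
  set T : ℕ → ℤ := fun k ↦ (-1 : ℤ) ^ k * (K + i).choose k *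
    ((c - k) * Ring.choose ((K + i - 1 : ℤ) - k) d * Ring.choose ((l + K : ℤ) - k) l)
  have hfull : ∑ k ∈ range (K + i + 1), T k = 0 :=
    sum_range_neg_one_pow_mul_choose_mul_ringChoose_eq_zero c _ _ hdeg
  have hmiddle : ∀ k ∈ Ico (K + 1) (K + i), T k = 0 := by
    intro k hk
    obtain ⟨hKk, hki⟩ := mem_Ico.mp hk
    by_cases hkl : k ≤ K + l
    · simp only [T, Int.ringChoose_eq_zero_of_lt (n := l) (y := (l + K : ℤ) - k) (by omega)
        (by omega), mul_zero]
    · simp only [T, Int.ringChoose_eq_zero_of_lt (n := d) (y := (K + i - 1 : ℤ) - k) (by omega)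
        (by omega), mul_zero, zero_mul]
  have hlast : T (K + i) =
      -((-1) ^ (K + i + d + l + 1) * (c - (K + i)) * Ring.choose ((i : ℤ) - 1) l) := by
    simp only [T, Nat.choose_self, Nat.cast_add]
    rw [show (K + i - 1 : ℤ) - (K + i) = -1 by ring, show (l + K : ℤ) - (K + i) = -(i - l) by ring,
      Int.ringChoose_neg, Int.ringChoose_neg, show (i - l + l - 1 : ℤ) = i - 1 by ring]
    simp only [Nat.cast_one, mul_one, add_sub_cancel_left, Ring.choose_natCast, Nat.choose_self]
    ring
  rw [range_eq_Ico, ← sum_Ico_consecutive _ (Nat.zero_le (K + 1)) (by omega : K + 1 ≤ K + i + 1),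
    sum_Ico_succ_top (by omega : K + 1 ≤ K + i), sum_eq_zero hmiddle, zero_add, hlast] at hfull
  rw [range_eq_Ico]
  linarith

theorem izC_eq_ringChoose {a b : ℤ} (ha : 0 ≤ a) (hb : 0 ≤ b) :
    izC a b = Ring.choose a b.toNat := by
  lift a to ℕ using ha
  lift b to ℕ using hb
  rw [izC, Ring.choose_natCast]
  split_ifs with h
  · simp
  · rw [Nat.choose_eq_zero_of_lt (by omega), Nat.cast_zero]

theorem stmt_8_general (n c i l m : ℤ)
    (hl : max 0 n ≤ l) (hi : max 1 (n + 1) ≤ i)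
    (hl' : l ≤ min m (n + c - m - 2)) :
    (i ≤ l →
      (∑ k ∈ Finset.Icc (0 : ℤ) (c - m - 1),
        (-1 : ℤ) ^ k.toNat * (c - k) * izC (c - m - 1 + i) k *
          izC (c - m - 2 + i - k) (i - (n + 1)) * izC (l + c - m - 1 - k) l) = 0) ∧
    (l ≤ i - 1 →
      (∑ k ∈ Finset.Icc (0 : ℤ) (c - m - 1),
        (-1 : ℤ) ^ k.toNat * (c - k) * izC (c - m - 1 + i) k *
          izC (c - m - 2 + i - k) (i - (n + 1)) * izC (l + c - m - 1 - k) l)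
        = (-1 : ℤ) ^ (n + c - m - 1 + l).toNat * (m + 1 - i) * izC (i - 1) l) := by
  obtain ⟨hl0, hnl⟩ := max_le_iff.mp hl
  obtain ⟨hi1, hni⟩ := max_le_iff.mp hi
  have hlc := (le_min_iff.mp hl').2
  obtain ⟨K, hK⟩ : ∃ K : ℕ, c - m - 1 = K := ⟨(c - m - 1).toNat, by omega⟩
  obtain ⟨d, hd⟩ : ∃ d : ℕ, i - (n + 1) = d := ⟨(i - (n + 1)).toNat, by omega⟩
  lift l to ℕ using hl0
  lift i to ℕ using (by omega)
  have hsum : ∑ k ∈ Icc (0 : ℤ) (c - m - 1),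
        (-1 : ℤ) ^ k.toNat * (c - k) * izC (c - m - 1 + i) k *
          izC (c - m - 2 + i - k) (i - (n + 1)) * izC (l + c - m - 1 - k) l =
      (-1) ^ (K + i + d + l + 1) * (c - (K + i)) * Ring.choose ((i : ℤ) - 1) l := by
    rw [← sum_range_neg_one_pow_mul_choose_mul_ringChoose_truncated c (by omega) (by omega)
      (by omega), hK, Int.Icc_eq_finset_map, sum_map]
    refine sum_congr (by simp) fun k hk ↦ ?_
    have hkK := mem_range.mp hk
    simp only [Function.Embedding.trans_apply, Nat.castEmbedding_apply, addLeftEmbedding_apply,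
      zero_add, Int.toNat_natCast]
    rw [izC_eq_ringChoose (by omega) (by omega), izC_eq_ringChoose (by omega) (by omega),
      izC_eq_ringChoose (by omega) (by omega), hd, Int.toNat_natCast, Int.toNat_natCast,
      Int.toNat_natCast, ← Nat.cast_add, Ring.choose_natCast,
      show c - m - 2 + i - k = (K + i - 1 : ℤ) - k by omega,
      show l + c - m - 1 - k = (l + K : ℤ) - k by omega]
    push_cast
    ring
  refine ⟨fun hil ↦ ?_, fun hli ↦ ?_⟩
  · rw [hsum, Int.ringChoose_eq_zero_of_lt (by omega) (by omega), mul_zero]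
  · rw [hsum, izC_eq_ringChoose (by omega) (by omega), Int.toNat_natCast,
      show c - (K + i) = m + 1 - i by omega, neg_one_pow_eq_pow_mod_two,
      neg_one_pow_eq_pow_mod_two (n := (n + c - m - 1 + l).toNat),
      show (K + i + d + l + 1) % 2 = (n + c - m - 1 + l).toNat % 2 by omega]

/-- specialization of the finite-difference identity with vanishing
    boundary terms. -/
theorem stmt_8 (n c i l m : ℤ)
    (hm1 : 1 ≤ m) (hmc : m ≤ c - 1) (hn : 0 ≤ n + c - m - 1)
    (hl : max 0 n ≤ l) (hi : max 1 (n + 1) ≤ i)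
    (hl' : l ≤ min m (n + c - m - 2)) (hnc : 2 * m + 2 ≤ n + c) :
    (i ≤ l →
      (∑ k ∈ Finset.Icc (0 : ℤ) (c - m - 1),
        (-1 : ℤ) ^ k.toNat * (c - k) * izC (c - m - 1 + i) k *
          izC (c - m - 2 + i - k) (i - (n + 1)) * izC (l + c - m - 1 - k) l) = 0) ∧
    (l ≤ i - 1 →
      (∑ k ∈ Finset.Icc (0 : ℤ) (c - m - 1),
        (-1 : ℤ) ^ k.toNat * (c - k) * izC (c - m - 1 + i) k *
          izC (c - m - 2 + i - k) (i - (n + 1)) * izC (l + c - m - 1 - k) l)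
        = (-1 : ℤ) ^ (n + c - m - 1 + l).toNat * (m + 1 - i) * izC (i - 1) l) :=
  stmt_8_general n c i l m hl hi hl'
end

section
/- Let p ≥ 5 be prime and let s = b + c(p−1) with 2 ≤ b ≤ p − 1 and 1 ≤ c ≤ p − 1. Let T = Σ C(s, j), where the sum runs over integers j with 0 < j < s and j ≡ b (mod p−1). Then p divides T, and b · (T/p) ≡ (b − s) (mod p); in particular the p-adic valuation of T is exactly 1 when b ≢ s (mod p). -/
/-!
Work in `ZMod (p ^ 2)`. The Teichmüller lift `ζ` of a primitive root mod `p` satisfies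
`ζ ^ (p - 1) = 1`, and `ζ ^ k - 1` is a unit whenever `p - 1 ∤ k`; so the roots-of-unity filter
writes `(p - 1)` times the lacunary sum `∑_{j ≡ r (mod p - 1)} C(m, j)` as
`∑_t ζ^(-r t) (1 + ζ^t)^m`. Since `p ∣ x^p - x`, we get `(x^p - x)^2 = 0` in `ZMod (p ^ 2)`, hence
`x^(m + c(p-1)) - x^m = c (x^(m + p - 1) - x^m)` for `m ≥ 2`, and therefore
`T ≡ c · C(b + p - 1, b) (mod p²)`. Finally `b · C(b + p - 1, b) = p · C(b + p - 1, b - 1)` and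
`C(b + p - 1, b - 1) ≡ 1 (mod p)` by Lucas, so `b · T/p ≡ c (mod p)`; as `p ∤ c`, also `p² ∤ T`.
-/

open Finset

theorem mul_one_add_pow_of_mul_sq_eq_zero {R : Type*} [CommRing R] {x y : R}
    (h : x * y ^ 2 = 0) (n : ℕ) : x * (1 + y) ^ n = x * (1 + n * y) := by
  induction n with
  | zero => simp
  | succ n ih =>
    rw [pow_succ, ← mul_assoc, ih]
    push_cast
    linear_combination (n : R) * h

theorem sum_range_pow_pow_eq_ite {R : Type*} [CommRing R] {ζ : R} {n : ℕ} (hζ : ζ ^ n = 1)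
    (hunit : ∀ k, ¬ n ∣ k → IsUnit (ζ ^ k - 1)) (k : ℕ) :
    ∑ t ∈ range n, (ζ ^ k) ^ t = if n ∣ k then (n : R) else 0 := by
  split_ifs with hk
  · obtain ⟨l, rfl⟩ := hk
    simp [pow_mul, hζ]
  · refine (hunit k hk).mul_left_eq_zero.mp ?_
    rw [geom_sum_mul, ← pow_mul, mul_comm, pow_mul, hζ, one_pow, sub_self]

theorem Nat.dvd_sub_one_mul_add_iff {n r j : ℕ} (hn : 0 < n) :
    n ∣ (n - 1) * r + j ↔ j % n = r % n := by
  have hnr : (n - 1) * r + r ≡ 0 [MOD n] := by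
    rw [← Nat.succ_mul, Nat.succ_eq_add_one, Nat.sub_one_add_one hn.ne']
    exact Nat.modEq_zero_iff_dvd.mpr (dvd_mul_right n r)
  rw [← Nat.modEq_zero_iff_dvd]
  exact ⟨fun h => Nat.ModEq.add_left_cancel' _ (h.trans hnr.symm),
    fun h => (Nat.ModEq.add_left _ h).trans hnr⟩

/-- Roots-of-unity filter; the weight `ζ ^ ((n - 1) * r * t)` stands for `ζ ^ (-r t)`. -/
theorem sum_range_mul_one_add_pow {R : Type*} [CommRing R] {ζ : R} {n : ℕ} (hn : 0 < n)
    (hζ : ζ ^ n = 1) (hunit : ∀ k, ¬ n ∣ k → IsUnit (ζ ^ k - 1)) (r m : ℕ) :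
    ∑ t ∈ range n, ζ ^ ((n - 1) * r * t) * (1 + ζ ^ t) ^ m =
      n * ∑ j ∈ (range (m + 1)).filter (· % n = r % n), (m.choose j : R) := by
  calc ∑ t ∈ range n, ζ ^ ((n - 1) * r * t) * (1 + ζ ^ t) ^ m
      = ∑ t ∈ range n, ∑ j ∈ range (m + 1), (ζ ^ ((n - 1) * r + j)) ^ t * (m.choose j : R) := by
        refine sum_congr rfl fun t _ => ?_
        rw [add_comm, add_pow, mul_sum]
        refine sum_congr rfl fun j _ => ?_
        ring
    _ = ∑ j ∈ range (m + 1), (if n ∣ (n - 1) * r + j then (n : R) else 0) * m.choose j := by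
        rw [sum_comm]
        simp only [← sum_mul, sum_range_pow_pow_eq_ite hζ hunit]
    _ = n * ∑ j ∈ (range (m + 1)).filter (· % n = r % n), (m.choose j : R) := by
        simp only [sum_filter, mul_sum, Nat.dvd_sub_one_mul_add_iff hn, ite_mul, zero_mul, mul_ite,
          mul_zero]

theorem ZMod.isUnit_of_castHom_ne_zero {p d : ℕ} [Fact p.Prime] (hd : d ≠ 0) {x : ZMod (p ^ d)}
    (hx : ZMod.castHom (dvd_pow_self p hd) (ZMod p) x ≠ 0) : IsUnit x := by
  rw [← ZMod.natCast_zmod_val x, map_natCast, Ne, ZMod.natCast_eq_zero_iff] at hx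
  rwa [← ZMod.natCast_zmod_val x,
    ZMod.isUnit_natCast_iff_not_dvd_pow Fact.out (Nat.pos_of_ne_zero hd)]

theorem ZMod.sq_pow_sub_self_eq_zero {p : ℕ} [Fact p.Prime] (x : ZMod (p ^ 2)) :
    (x ^ p - x) ^ 2 = 0 := by
  obtain ⟨a, rfl⟩ : ∃ a : ℤ, (a : ZMod (p ^ 2)) = x := ⟨x.cast, ZMod.intCast_zmod_cast x⟩
  have hfermat : (p : ℤ) ∣ a ^ p - a := by
    rw [← ZMod.intCast_zmod_eq_zero_iff_dvd]
    push_cast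
    rw [ZMod.pow_card, sub_self]
  have := (ZMod.intCast_zmod_eq_zero_iff_dvd _ (p ^ 2)).mpr
    (by exact_mod_cast pow_dvd_pow_of_dvd hfermat 2)
  exact_mod_cast this

theorem ZMod.pow_add_mul_sub_pow {p : ℕ} [Fact p.Prime] {m : ℕ} (hm : 2 ≤ m) (c : ℕ)
    (x : ZMod (p ^ 2)) :
    x ^ (m + c * (p - 1)) - x ^ m = (c : ZMod (p ^ 2)) * (x ^ (m + (p - 1)) - x ^ m) := by
  have hp : p - 1 + 1 = p := Nat.sub_add_cancel (Fact.out : p.Prime).one_le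
  have hsq : x ^ m * (x ^ (p - 1) - 1) ^ 2 = 0 := by
    obtain ⟨k, rfl⟩ : ∃ k, m = k + 2 := ⟨m - 2, by omega⟩
    calc x ^ (k + 2) * (x ^ (p - 1) - 1) ^ 2 = x ^ k * (x ^ (p - 1 + 1) - x) ^ 2 := by ring
      _ = 0 := by rw [hp, ZMod.sq_pow_sub_self_eq_zero, mul_zero]
  have := mul_one_add_pow_of_mul_sq_eq_zero hsq c
  rw [add_sub_cancel] at this
  rw [pow_add, pow_add, mul_comm c, pow_mul, this]
  ring

/-- `ζ` is the Teichmüller lift `ũ ^ p` of a generator `u` of `(ZMod p)ˣ`; it reduces to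
`u ^ p = u`. -/
theorem ZMod.exists_pow_eq_one_isUnit_pow_sub_one (p : ℕ) [hp : Fact p.Prime] :
    ∃ ζ : ZMod (p ^ 2), ζ ^ (p - 1) = 1 ∧ ∀ k, ¬ p - 1 ∣ k → IsUnit (ζ ^ k - 1) := by
  obtain ⟨u, hu⟩ := IsCyclic.exists_ofOrder_eq_natCard (α := (ZMod p)ˣ)
  rw [Nat.card_eq_fintype_card, ZMod.card_units] at hu
  set a := (u : ZMod p).val
  have ha : (a : ZMod p) = u := ZMod.natCast_zmod_val _
  have hcop : a.Coprime (p ^ 2) := by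
    refine Nat.Coprime.pow_right 2 (Nat.coprime_comm.mp (hp.out.coprime_iff_not_dvd.mpr ?_))
    rw [← ZMod.natCast_eq_zero_iff, ha]
    exact u.ne_zero
  refine ⟨(a : ZMod (p ^ 2)) ^ p, ?_, fun k hk => ZMod.isUnit_of_castHom_ne_zero two_ne_zero ?_⟩
  · have := (ZMod.natCast_eq_natCast_iff _ _ _).mpr (Nat.ModEq.pow_totient hcop)
    rw [Nat.totient_prime_pow hp.out two_pos] at this
    simpa [← pow_mul] using this
  · rw [map_sub, map_one, map_pow, map_pow, map_natCast, ha, ZMod.pow_card, sub_ne_zero]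
    intro h
    exact hk (hu ▸ orderOf_units (y := u) ▸ orderOf_dvd_of_pow_eq_one h)

def lacunaryChooseSum (n r m : ℕ) : ℕ :=
  ∑ j ∈ (range (m + 1)).filter (· % n = r % n), m.choose j

theorem lacunaryChooseSum_eq_add_sum_Ioo {n r m : ℕ} (hm : 0 < m) (hmr : m % n = r % n) :
    lacunaryChooseSum n r m =
      (if r % n = 0 then 1 else 0) + ∑ j ∈ (Ioo 0 m).filter (· % n = r % n), m.choose j + 1 := by
  rw [lacunaryChooseSum, sum_filter, sum_filter, sum_range_succ, sum_range_eq_add_Ico _ hm,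
    ← Ico_add_one_left_eq_Ioo]
  simp [hmr, eq_comm]

theorem ZMod.lacunaryChooseSum_add_mul_sub {p : ℕ} [hp : Fact p.Prime] {m : ℕ} (hm : 2 ≤ m)
    (r c : ℕ) :
    (lacunaryChooseSum (p - 1) r (m + c * (p - 1)) : ZMod (p ^ 2)) - lacunaryChooseSum (p - 1) r m =
      c * (lacunaryChooseSum (p - 1) r (m + (p - 1)) - lacunaryChooseSum (p - 1) r m) := by
  obtain ⟨ζ, hζ, hunit⟩ := ZMod.exists_pow_eq_one_isUnit_pow_sub_one p
  have hn : 0 < p - 1 := Nat.sub_pos_of_lt hp.out.one_lt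
  have hfilter (k : ℕ) : ((p - 1 : ℕ) : ZMod (p ^ 2)) * lacunaryChooseSum (p - 1) r k =
      ∑ t ∈ range (p - 1), ζ ^ ((p - 1 - 1) * r * t) * (1 + ζ ^ t) ^ k := by
    rw [sum_range_mul_one_add_pow hn hζ hunit, lacunaryChooseSum, Nat.cast_sum]
  have hunit_pred : IsUnit ((p - 1 : ℕ) : ZMod (p ^ 2)) :=
    (ZMod.isUnit_natCast_iff_not_dvd_pow hp.out two_pos).mpr
      (Nat.not_dvd_of_pos_of_lt hn (Nat.sub_lt hp.out.pos one_pos))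
  refine hunit_pred.mul_left_cancel ?_
  rw [mul_sub, hfilter, hfilter, mul_left_comm, mul_sub, hfilter, hfilter, ← sum_sub_distrib,
    ← sum_sub_distrib, mul_sum]
  refine sum_congr rfl fun t _ => ?_
  rw [← mul_sub, ← mul_sub, ZMod.pow_add_mul_sub_pow hm]
  ring

theorem Nat.ModEq.eq_of_pos_of_lt_add {n j b : ℕ} (h : j ≡ b [MOD n]) (hj0 : 0 < j)
    (hj : j < b + n) (hb : b ≤ n) : j = b :=
  h.eq_of_abs_lt (abs_sub_lt_iff.mpr ⟨by omega, by omega⟩)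

theorem Nat.filter_Ioo_mod_eq_eq_empty {n b : ℕ} (hb : b ≤ n) :
    (Ioo 0 b).filter (· % n = b % n) = ∅ := by
  refine filter_eq_empty_iff.mpr fun j hj hjb => ?_
  rw [mem_Ioo] at hj
  exact hj.2.ne (Nat.ModEq.eq_of_pos_of_lt_add hjb hj.1 (by omega) hb)

theorem Nat.filter_Ioo_add_mod_eq_eq_singleton {n b : ℕ} (hb0 : 0 < b) (hb : b ≤ n) :
    (Ioo 0 (b + n)).filter (· % n = b % n) = {b} := by
  ext j
  simp only [mem_filter, mem_Ioo, mem_singleton]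
  refine ⟨fun ⟨hj, hjb⟩ => Nat.ModEq.eq_of_pos_of_lt_add hjb hj.1 hj.2 hb, ?_⟩
  rintro rfl
  exact ⟨⟨hb0, by omega⟩, rfl⟩

theorem ZMod.sum_filter_Ioo_choose_eq {p b : ℕ} [hp : Fact p.Prime] (hb1 : 2 ≤ b)
    (hb2 : b ≤ p - 1) (c : ℕ) :
    ∑ j ∈ (Ioo 0 (b + c * (p - 1))).filter (· % (p - 1) = b % (p - 1)),
      ((b + c * (p - 1)).choose j : ZMod (p ^ 2)) = c * (b + (p - 1)).choose b := by
  have key := ZMod.lacunaryChooseSum_add_mul_sub (p := p) hb1 b c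
  rw [lacunaryChooseSum_eq_add_sum_Ioo (by omega) (Nat.add_mul_mod_self_right ..),
    lacunaryChooseSum_eq_add_sum_Ioo (by omega) rfl,
    lacunaryChooseSum_eq_add_sum_Ioo (by omega) (Nat.add_mod_right b (p - 1)),
    Nat.filter_Ioo_mod_eq_eq_empty hb2, Nat.filter_Ioo_add_mod_eq_eq_singleton (by omega) hb2]
    at key
  push_cast [sum_empty, sum_singleton] at key
  linear_combination key

theorem Nat.choose_add_sub_one_mul (b p : ℕ) (hb : 0 < b) (hp : 0 < p) :
    (b + (p - 1)).choose b * b = (b + (p - 1)).choose (b - 1) * p := by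
  obtain ⟨k, rfl⟩ : ∃ k, b = k + 1 := ⟨b - 1, by omega⟩
  rw [Nat.choose_succ_right_eq]
  congr 2
  omega

theorem Nat.choose_add_sub_one_modEq_one {p b : ℕ} (hp : p.Prime) (hb0 : 0 < b) (hb : b ≤ p) :
    (b + (p - 1)).choose (b - 1) ≡ 1 [MOD p] := by
  have := Fact.mk hp
  have hlt : b - 1 < p := by omega
  have hlucas := Choose.choose_modEq_choose_mod_mul_choose_div_nat (p := p) (n := b - 1 + p)
    (k := b - 1)
  rw [Nat.add_mod_right, Nat.add_div_right _ hp.pos, Nat.mod_eq_of_lt hlt, Nat.div_eq_of_lt hlt,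
    Nat.choose_self, Nat.choose_zero_right, mul_one] at hlucas
  rwa [show b + (p - 1) = b - 1 + p by omega]

theorem Int.dvd_and_mul_ediv_modEq {p b c C D T : ℤ} (hp : Prime p) (hb : ¬ p ∣ b)
    (hT : T ≡ c * C [ZMOD p ^ 2]) (hC : C * b = D * p) (hD : D ≡ 1 [ZMOD p]) :
    p ∣ T ∧ b * (T / p) ≡ c [ZMOD p] := by
  have hbT : p ^ 2 ∣ b * T - p * (c * D) := by
    have : b * T - p * (c * D) = -(b * (c * C) - b * T) := by linear_combination c * hC
    rw [this, dvd_neg]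
    exact (hT.mul_left b).dvd
  have hpT : p ∣ T := by
    have := (dvd_pow_self p two_ne_zero).trans hbT
    rw [dvd_sub_left (dvd_mul_right _ _)] at this
    exact (hp.dvd_or_dvd this).resolve_left hb
  obtain ⟨T₁, rfl⟩ := hpT
  rw [Int.mul_ediv_cancel_left _ hp.ne_zero]
  refine ⟨dvd_mul_right _ _, ?_⟩
  have : p * p ∣ p * (b * T₁ - c * D) := by rw [← sq]; convert hbT using 1; ring
  have := (Int.modEq_iff_dvd.mpr ((mul_dvd_mul_iff_left hp.ne_zero).mp this)).symm
  simpa using this.trans (hD.mul_left c)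

theorem stmt_10_general (p b c s : ℕ) (hp : p.Prime)
    (hb1 : 2 ≤ b) (hb2 : b ≤ p - 1) (hc1 : 1 ≤ c) (hc2 : c ≤ p - 1)
    (hs : s = b + c * (p - 1)) :
    let T : ℤ := ∑ j ∈ (Finset.Ioo 0 s).filter (fun j => j % (p - 1) = b % (p - 1)),
      (s.choose j : ℤ)
    (p : ℤ) ∣ T ∧
    (b : ℤ) * (T / (p : ℤ)) ≡ (b : ℤ) - (s : ℤ) [ZMOD (p : ℤ)] ∧
    (¬ ((b : ℤ) ≡ (s : ℤ) [ZMOD (p : ℤ)]) → ¬ ((p : ℤ) ^ 2 ∣ T)) := by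
  intro T
  have := Fact.mk hp
  have hT : T ≡ c * ((b + (p - 1)).choose b : ℕ) [ZMOD (p : ℤ) ^ 2] := by
    rw [← Nat.cast_pow, ← ZMod.intCast_eq_intCast_iff]
    push_cast [T, hs]
    exact ZMod.sum_filter_Ioo_choose_eq hb1 hb2 c
  have hpb : ¬ (p : ℤ) ∣ b := by
    rw [Int.natCast_dvd_natCast]
    exact Nat.not_dvd_of_pos_of_lt (by omega) (by omega)
  obtain ⟨hpT, hbT⟩ := Int.dvd_and_mul_ediv_modEq (D := ((b + (p - 1)).choose (b - 1) : ℕ))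
    (Nat.prime_iff_prime_int.mp hp) hpb hT
    (by exact_mod_cast Nat.choose_add_sub_one_mul b p (by omega) hp.pos)
    (by exact_mod_cast Nat.choose_add_sub_one_modEq_one hp (by omega) (by omega))
  have hcs : (c : ℤ) ≡ b - s [ZMOD p] := by
    rw [Int.modEq_iff_dvd, hs]
    push_cast [Nat.cast_sub hp.one_le]
    exact ⟨-c, by ring⟩
  refine ⟨hpT, hbT.trans hcs, fun _ hp2 => ?_⟩
  have hpc : (p : ℤ) ∣ c := by
    have : (p : ℤ) ∣ T / p := Int.dvd_div_of_mul_dvd (by rwa [← sq])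
    exact (Int.ModEq.dvd_iff hbT).mp (this.mul_left _)
  rw [Int.natCast_dvd_natCast] at hpc
  exact Nat.not_dvd_of_pos_of_lt (by omega) (by omega) hpc

/-- p ∣ T and b·(T/p) ≡ b − s (mod p), where
    T = Σ_{0<j<s, j≡b (p−1)} C(s,j); moreover ν_p(T) = 1 when b ≢ s (mod p). -/
theorem stmt_10 (p b c s : ℕ) (hp : p.Prime) (hp5 : 5 ≤ p)
    (hb1 : 2 ≤ b) (hb2 : b ≤ p - 1) (hc1 : 1 ≤ c) (hc2 : c ≤ p - 1)
    (hs : s = b + c * (p - 1)) :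
    let T : ℤ := ∑ j ∈ (Finset.Ioo 0 s).filter (fun j => j % (p - 1) = b % (p - 1)),
      (s.choose j : ℤ)
    (p : ℤ) ∣ T ∧
    (b : ℤ) * (T / (p : ℤ)) ≡ (b : ℤ) - (s : ℤ) [ZMOD (p : ℤ)] ∧
    (¬ ((b : ℤ) ≡ (s : ℤ) [ZMOD (p : ℤ)]) → ¬ ((p : ℤ) ^ 2 ∣ T)) :=
  stmt_10_general p b c s hp hb1 hb2 hc1 hc2 hs
end

section
/- Let p be a prime and let b, c, m be integers with c + 1 ≤ b ≤ p and 1 ≤ m ≤ min(b − c, c − 1). Consider the m × m matrix M over F_p with entries M(i, l) = C(b−c−l, b−c+1−i) · C(c, c−m−1+i) mod p, for 1 ≤ i ≤ m (rows) and 0 ≤ l ≤ m−1 (columns). Then M is lower triangular (M(i,l) = 0 whenever i < l + 1) and all diagonal entries M(l+1, l) are nonzero mod p; in particular M is invertible over F_p. -/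
/-- the matrix M(i,l) = C(b−c−l, b−c+1−i)·C(c, c−m−1+i) (1 ≤ i ≤ m,
    0 ≤ l ≤ m−1) over F_p is lower triangular with nonzero diagonal, hence invertible. -/
theorem stmt_14 (p b c m : ℕ) (hp : p.Prime)
    (hcb : c + 1 ≤ b) (hbp : b ≤ p) (hm1 : 1 ≤ m) (hm2 : m ≤ min (b - c) (c - 1)) :
    let M : Matrix (Fin m) (Fin m) (ZMod p) := fun i l =>
      ((b - c - (l : ℕ)).choose (b - c + 1 - ((i : ℕ) + 1)) : ZMod p) *
        (c.choose (c - m - 1 + ((i : ℕ) + 1)) : ZMod p)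
    (∀ i l : Fin m, (i : ℕ) < (l : ℕ) → M i l = 0) ∧
    (∀ i : Fin m, M i i ≠ 0) ∧
    IsUnit M.det := by
  intro M
  haveI : Fact p.Prime := ⟨hp⟩
  have hcp : c < p := lt_of_lt_of_le hcb hbp
  have hmbc : m ≤ b - c := le_trans hm2 (min_le_left _ _)
  have hmc : m ≤ c - 1 := le_trans hm2 (min_le_right _ _)
  have hc1 : 1 ≤ c := by omega
  -- diagonal entries nonzero
  have hdiag : ∀ i : Fin m, M i i ≠ 0 := by
    intro i
    have hi : (i : ℕ) < m := i.is_lt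
    have h1 : b - c + 1 - ((i : ℕ) + 1) = b - c - (i : ℕ) := by omega
    have h2 : (b - c - (i : ℕ)).choose (b - c - (i : ℕ)) = 1 := Nat.choose_self _
    have hk : c - m - 1 + ((i : ℕ) + 1) ≤ c := by omega
    have hnz : ¬ p ∣ c.choose (c - m - 1 + ((i : ℕ) + 1)) := by
      intro hdvd
      have := Nat.choose_mul_factorial_mul_factorial hk
      have hpc : p ∣ c.factorial := by
        rw [← this]; exact (hdvd.mul_right _).mul_right _
      have := (Nat.Prime.dvd_factorial hp).mp hpc
      omega
    simp only [M, h1, h2, Nat.cast_one, one_mul]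
    rw [Ne, ZMod.natCast_eq_zero_iff]
    exact hnz
  have hlow : ∀ i l : Fin m, (i : ℕ) < (l : ℕ) → M i l = 0 := by
    intro i l hil
    have hl : (l : ℕ) < m := l.is_lt
    have : (b - c - (l : ℕ)).choose (b - c + 1 - ((i : ℕ) + 1)) = 0 := by
      apply Nat.choose_eq_zero_of_lt
      omega
    simp only [M, this, Nat.cast_zero, zero_mul]
  refine ⟨hlow, hdiag, ?_⟩
  have hdet : M.det = ∏ i, M i i := by
    apply Matrix.det_of_lowerTriangular
    intro i j hij
    exact hlow i j hij
  rw [hdet]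
  exact (Finset.prod_ne_zero_iff.mpr (fun i _ => hdiag i)).isUnit
end
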